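/- The graph K_13 □ K_5 has an L_8-decomposition. -/

import Mathlib

open SimpleGraph

/-- The sunlet graph `L₈` on 8 vertices: a 4-cycle on vertices `0,1,2,3`
together with pendant vertices `4,5,6,7`, where pendant `i+4` is attached
to cycle vertex `i`. -/
def sunlet8 : SimpleGraph (Fin 8) :=
  SimpleGraph.fromRel (fun a b =>
    (a.val < 4 ∧ b.val < 4 ∧ b.val = (a.val + 1) % 4) ∨ (a.val < 4 ∧ b.val = a.val + 4))

/-- A set of edges is a copy of the sunlet graph `L₈` if it is the image of the
edge set of `sunlet8` under an injective map of vertices. -/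
def IsSunletCopy {V : Type*} (s : Set (Sym2 V)) : Prop :=
  ∃ f : Fin 8 → V, Function.Injective f ∧ s = Sym2.map f '' sunlet8.edgeSet

/-- A graph `G` has an `L₈`-decomposition if its edge set can be partitioned into
parts, each of which induces a subgraph isomorphic to the sunlet graph `L₈`. -/
def HasSunletDecomposition {V : Type*} (G : SimpleGraph V) : Prop :=
  ∃ P : Set (Set (Sym2 V)),
    ⋃₀ P = G.edgeSet ∧ P.PairwiseDisjoint id ∧ ∀ s ∈ P, IsSunletCopy s

/- ### Auxiliary constructions -/

instance : DecidableRel sunlet8.Adj := fun a b =>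
  decidable_of_iff _ (SimpleGraph.fromRel_adj _ a b).symm

abbrev V' := Fin 13 × Fin 5

abbrev G' : SimpleGraph V' := (⊤ : SimpleGraph (Fin 13)) □ (⊤ : SimpleGraph (Fin 5))

instance : DecidableRel G'.Adj := fun _ _ =>
  decidable_of_iff _ (SimpleGraph.boxProd_adj).symm

def gmap (n : Fin 65) : V' :=
  (⟨n.val % 13, Nat.mod_lt _ (by norm_num)⟩, ⟨n.val % 5, Nat.mod_lt _ (by norm_num)⟩)

def base : Fin 8 → Fin 65 := ![0, 5, 15, 30, 20, 45, 28, 56]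

def fmap (t : Fin 65) (i : Fin 8) : V' := gmap (base i + t)

def partF (t : Fin 65) : Finset (Sym2 V') :=
  sunlet8.edgeFinset.image (Sym2.map (fmap t))

def keyf (p : V') : ℕ := p.1.val * 5 + p.2.val

def ekey (e : Sym2 V') : ℕ :=
  Sym2.lift ⟨fun x y => min (keyf x) (keyf y) * 100 + max (keyf x) (keyf y),
    fun x y => by simp [min_comm, max_comm]⟩ e

def edgeIdx : List (Fin 8 × Fin 8) := [(0,1),(1,2),(2,3),(3,0),(0,4),(1,5),(2,6),(3,7)]

def keys (t : Fin 65) : List ℕ := edgeIdx.map (fun p => ekey s(fmap t p.1, fmap t p.2))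

def allKeys : List ℕ := (List.finRange 65).flatMap keys

def lits : List ℕ := [25, 1025, 1020, 20, 35, 2530, 1013, 2021, 631, 1631, 1626, 626, 641, 3136, 1619, 2627, 1237, 2237, 2232, 1232, 1247, 3742, 2022, 3233, 1843, 2843, 2838, 1838, 1853, 4348, 2628, 3839, 2449, 3449, 3444, 2444, 2459, 4954, 3234, 4044, 2550, 3550, 3545, 2545, 2560, 5055, 3538, 4546, 3156, 4156, 4151, 3151, 131, 5661, 4144, 5152, 3762, 4762, 4757, 3757, 737, 262, 4547, 5758, 343, 353, 5363, 4363, 1343, 308, 5153, 6364, 949, 959, 459, 449, 1949, 914, 5759, 4, 1050, 1060, 560, 550, 2050, 1015, 6063, 506, 1656, 116, 111, 1156, 2656, 1621, 104, 1112, 2262, 722, 717, 1762, 3262, 2227, 507, 1718, 328, 1328, 1323, 323, 338, 2833, 1113, 2324, 934, 1934, 1929, 929, 944, 3439, 1719, 2529, 1035, 2035, 2030, 1030, 1045, 3540, 2023, 3031, 1641, 2641, 2636, 1636, 1651, 4146, 2629, 3637, 2247, 3247, 3242, 2242, 2257, 4752, 3032, 4243, 2853, 3853, 3848, 2848, 2863,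 5358, 3638, 4849, 3459, 4459, 4454, 3454, 434, 5964, 4244, 5054, 3560, 4560, 4555, 3555, 535, 60, 4548, 5556, 141, 151, 5161, 4161, 1141, 106, 5154, 6162, 747, 757, 257, 247, 1747, 712, 5557, 203, 1353, 1363, 863, 853, 2353, 1318, 6163, 809, 1959, 419, 414, 1459, 2959, 1924, 204, 1014, 2060, 520, 515, 1560, 3060, 2025, 508, 1516, 126, 1126, 1121, 121, 136, 2631, 1114, 2122, 732, 1732, 1727, 727, 742, 3237, 1517, 2728, 1338, 2338, 2333, 1333, 1348, 3843, 2123, 3334, 1944, 2944, 2939, 1939, 1954, 4449, 2729, 3539, 2045, 3045, 3040, 2040, 2055, 4550, 3033, 4041, 2651, 3651, 3646, 2646, 2661, 5156, 3639, 4647, 3257, 4257, 4252, 3252, 232, 5762, 4042, 5253, 3863, 4863, 4858, 3858, 838, 363, 4648, 5859, 444, 454, 5464, 4464, 1444, 409, 5254, 6064, 545, 555, 55, 45, 1545, 510, 5558, 1, 1151, 1161, 661, 651, 2151, 1116, 6164, 607, 1757, 217, 212, 1257, 2757, 1722, 2, 1213, 2363, 823, 818, 1863, 3363, 2328, 608,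 1819, 429, 1429, 1424, 424, 439, 2934, 1214, 2024, 530, 1530, 1525, 525, 540, 3035, 1518, 2526, 1136, 2136, 2131, 1131, 1146, 3641, 2124, 3132, 1742, 2742, 2737, 1737, 1752, 4247, 2527, 3738, 2348, 3348, 3343, 2343, 2358, 4853, 3133, 4344, 2954, 3954, 3949, 2949, 2964, 5459, 3739, 4549, 3055, 4055, 4050, 3050, 30, 5560, 4043, 5051, 3661, 4661, 4656, 3656, 636, 161, 4649, 5657, 242, 252, 5262, 4262, 1242, 207, 5052, 6263, 848, 858, 358, 348, 1848, 813, 5658, 304, 1454, 1464, 964, 954, 2454, 1419, 6264, 509, 1555, 15, 10, 1055, 2555, 1520, 3, 1011, 2161, 621, 616, 1661, 3161, 2126, 609, 1617, 227, 1227, 1222, 222, 237, 2732, 1012, 2223, 833, 1833, 1828, 828, 843, 3338, 1618, 2829, 1439, 2439, 2434, 1434, 1449, 3944, 2224, 3034, 1540, 2540, 2535, 1535, 1550, 4045, 2528, 3536, 2146, 3146, 3141, 2141, 2156, 4651, 3134, 4142, 2752, 3752, 3747, 2747, 2762, 5257, 3537, 4748, 3358, 4358, 4353, 3353, 333, 5863,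 4143, 5354, 3964, 4964, 4959, 3959, 939, 464, 4749, 5559, 40, 50, 5060, 4060, 1040, 5, 5053, 6061, 646, 656, 156, 146, 1646, 611, 5659, 102, 1252, 1262, 762, 752, 2252, 1217, 6062, 708, 1858, 318, 313, 1358, 2858, 1823, 103, 1314, 2464, 924, 919, 1964, 3464, 2429, 709, 1519]

/- ### Decidable facts -/

set_option maxRecDepth 100000 in
set_option maxHeartbeats 2000000 in
theorem hk : allKeys = lits := by decide

set_option maxRecDepth 100000 in
set_option maxHeartbeats 2000000 in
theorem hnd : lits.Nodup := by decide

set_option maxRecDepth 100000 in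
set_option maxHeartbeats 2000000 in
theorem hinj : ∀ t, Function.Injective (fmap t) := by decide

set_option maxRecDepth 100000 in
set_option maxHeartbeats 2000000 in
theorem hadj : ∀ t : Fin 65, ∀ p ∈ edgeIdx, G'.Adj (fmap t p.1) (fmap t p.2) := by decide

theorem hE8 : sunlet8.edgeFinset = (edgeIdx.map fun p => s(p.1, p.2)).toFinset := by decide

theorem hE8card : sunlet8.edgeFinset.card = 8 := by decide

set_option maxRecDepth 1000000 in
set_option maxHeartbeats 4000000 in
theorem hGcard : G'.edgeFinset.card = 520 := by decide

/- ### Structural lemmas -/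

theorem mem_partF {t : Fin 65} {e : Sym2 V'} (he : e ∈ partF t) :
    ∃ p ∈ edgeIdx, e = s(fmap t p.1, fmap t p.2) := by
  obtain ⟨a, ha, rfl⟩ := Finset.mem_image.mp he
  rw [hE8, List.mem_toFinset, List.mem_map] at ha
  obtain ⟨p, hp, rfl⟩ := ha
  exact ⟨p, hp, rfl⟩

theorem key_mem {t : Fin 65} {e : Sym2 V'} (he : e ∈ partF t) : ekey e ∈ keys t := by
  obtain ⟨p, hp, rfl⟩ := mem_partF he
  exact List.mem_map.mpr ⟨p, hp, rfl⟩

theorem partF_subset (t : Fin 65) : partF t ⊆ G'.edgeFinset := by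
  intro e he
  obtain ⟨p, hp, rfl⟩ := mem_partF he
  exact SimpleGraph.mem_edgeFinset.mpr (hadj t p hp)

theorem partF_card (t : Fin 65) : (partF t).card = 8 := by
  rw [partF, Finset.card_image_of_injective _ (Sym2.map.injective (hinj t)), hE8card]

theorem keys_disj {t t' : Fin 65} (h : t ≠ t') : List.Disjoint (keys t) (keys t') := by
  have hnodup : allKeys.Nodup := hk ▸ hnd
  have := (List.nodup_flatMap.mp hnodup).2
  haveI hsymm : Std.Symm (Function.onFun List.Disjoint keys) := ⟨fun a b hab => List.Disjoint.symm hab⟩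
  exact this.forall
    (List.mem_finRange t) (List.mem_finRange t') h

theorem partF_disj {t t' : Fin 65} (h : t ≠ t') : Disjoint (partF t) (partF t') := by
  rw [Finset.disjoint_left]
  intro e he he'
  exact keys_disj h (key_mem he) (key_mem he')

set_option maxRecDepth 10000 in
theorem partF_biUnion : Finset.univ.biUnion partF = G'.edgeFinset := by
  apply Finset.eq_of_subset_of_card_le
  · exact fun e he => by
      obtain ⟨t, _, ht⟩ := Finset.mem_biUnion.mp he
      exact partF_subset t ht
  · rw [hGcard, Finset.card_biUnion (fun t _ t' _ h => partF_disj h),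
      Finset.sum_congr rfl (fun t _ => partF_card t), Finset.sum_const,
      Finset.card_univ]
    norm_num

/- ### Main theorem -/

theorem stmt_15 :
    HasSunletDecomposition ((⊤ : SimpleGraph (Fin 13)) □ (⊤ : SimpleGraph (Fin 5))) := by
  refine ⟨Set.range (fun t : Fin 65 => (↑(partF t) : Set (Sym2 V'))), ?_, ?_, ?_⟩
  · rw [Set.sUnion_range]
    rw [show G'.edgeSet = ↑G'.edgeFinset from (SimpleGraph.coe_edgeFinset G').symm]
    rw [← partF_biUnion, Finset.coe_biUnion]
    simp
  · intro a ha b hb hab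
    obtain ⟨t, rfl⟩ := ha
    obtain ⟨t', rfl⟩ := hb
    have htt : t ≠ t' := fun h => hab (by rw [h])
    exact Set.disjoint_iff_inter_eq_empty.mpr (by
      simpa [Set.disjoint_iff_inter_eq_empty] using
        (Finset.disjoint_coe.mpr (partF_disj htt)).inter_eq)
  · rintro s ⟨t, rfl⟩
    refine ⟨fmap t, hinj t, ?_⟩
    show (↑(partF t) : Set (Sym2 V')) = _
    rw [show partF t = sunlet8.edgeFinset.image (Sym2.map (fmap t)) from rfl,
      Finset.coe_image, SimpleGraph.coe_edgeFinset]
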